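/- arXiv:2002.02118 — 3 statements merged into one kernel-verified Lean document; each statement's English description precedes it below -/
import Mathlib

section
/- Let k be a field and let X' be a variable in the polynomial ring k[X₁, X₂, …, Xₙ], meaning there exist Y₂, …, Yₙ ∈ k[X₁, …, Xₙ] with k[X', Y₂, …, Yₙ] = k[X₁, …, Xₙ]. If X' and X₁ are comaximal, i.e., the ideal generated by X' and X₁ in k[X₁, …, Xₙ] is the unit ideal, then X' = α·X₁ + β for some α, β ∈ k with α ≠ 0. -/
open MvPolynomial

/-!
If `φ` is the automorphism with `φ X₁ = X'`, then `Q = φ⁻¹ X₁` is comaximal with `X₁`, so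
`Q ≡ c (mod X₁)` for a constant `c`. Applying `φ` to `Q - c = X₁ h` gives `X₁ - c = X' · φ h`;
as `X₁ - c` is prime and `X'` is not a unit, `φ h` is a nonzero constant.
-/

namespace MvPolynomial

variable {R : Type*} [CommRing R] {n : ℕ}

theorem prime_X_zero_sub_C [IsDomain R] (r : R) :
    Prime (X 0 - C r : MvPolynomial (Fin (n + 1)) R) := by
  rw [← MulEquiv.prime_iff (finSuccEquiv R n), map_sub, finSuccEquiv_X_zero,
    ← algebraMap_eq, AlgEquiv.commutes, Polynomial.algebraMap_apply, algebraMap_eq]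
  exact Polynomial.prime_X_sub_C _

theorem exists_isUnit_X_zero_dvd_sub_C_of_span_eq_top [IsReduced R]
    {Q : MvPolynomial (Fin (n + 1)) R} (h : Ideal.span {X 0, Q} = ⊤) :
    ∃ c : R, IsUnit c ∧ X 0 ∣ Q - C c := by
  set e := finSuccEquiv R n
  have hone : (1 : MvPolynomial (Fin (n + 1)) R) ∈ Ideal.span {X 0, Q} := h ▸ Submodule.mem_top
  obtain ⟨a, b, hab⟩ := Ideal.mem_span_pair.mp hone
  have hunit : IsUnit ((e Q).coeff 0) := by
    refine IsUnit.of_mul_eq_one_right ((e b).coeff 0) ?_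
    simpa [e, Polynomial.mul_coeff_zero, finSuccEquiv_X_zero] using
      congrArg (fun p => (e p).coeff 0) hab
  obtain ⟨c, hc, hcQ⟩ := isUnit_iff_eq_C_of_isReduced.mp hunit
  refine ⟨c, hc, ?_⟩
  rw [← map_dvd_iff e, map_sub, finSuccEquiv_X_zero, ← algebraMap_eq, AlgEquiv.commutes,
    Polynomial.algebraMap_apply, algebraMap_eq, ← hcQ]
  exact Polynomial.X_dvd_sub_C

end MvPolynomial

/-- Let `k` be a field and `X'` a variable of `k[X₁, …, Xₙ]` (part of a coordinate system).
If the ideal generated by `X'` and `X₁` is the unit ideal, then `X' = α·X₁ + β` with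
`α, β ∈ k`, `α ≠ 0`. -/
theorem variable_comaximal_with_coordinate
    {k : Type*} [Field k] (n : ℕ) (X' : MvPolynomial (Fin (n + 1)) k)
    (hvar : ∃ v : Fin (n + 1) → MvPolynomial (Fin (n + 1)) k, v 0 = X' ∧
      Function.Bijective
        (aeval v : MvPolynomial (Fin (n + 1)) k →ₐ[k] MvPolynomial (Fin (n + 1)) k))
    (hcomax : Ideal.span {X', X 0} = (⊤ : Ideal (MvPolynomial (Fin (n + 1)) k))) :
    ∃ α β : k, α ≠ 0 ∧ X' = C α * X 0 + C β := by
  obtain ⟨v, hv0, hbij⟩ := hvar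
  set φ := AlgEquiv.ofBijective _ hbij
  have hφ : φ (X 0) = X' := by simp [φ, hv0]
  have hspan : Ideal.span {X 0, φ.symm (X 0)} = ⊤ := by
    simpa [Ideal.map_span, Set.image_pair, Ideal.map_top, ← hφ] using
      congrArg (Ideal.map φ.symm) hcomax
  obtain ⟨c, -, h, hh⟩ := exists_isUnit_X_zero_dvd_sub_C_of_span_eq_top hspan
  have hfactor : X 0 - C c = X' * φ h := by
    simpa [hφ, show φ (C c) = C c from φ.commutes c] using congrArg φ hh
  have hX' : ¬ IsUnit X' := hφ ▸ (isUnit_map_iff φ _).not.mpr X_prime.not_isUnit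
  obtain ⟨u, hu, hCu⟩ := isUnit_iff_eq_C_of_isReduced.mp <|
    ((prime_X_zero_sub_C c).irreducible.isUnit_or_isUnit hfactor).resolve_left hX'
  refine ⟨u⁻¹, -(u⁻¹ * c), inv_ne_zero hu.ne_zero, ?_⟩
  have hinv : C u * C u⁻¹ = (1 : MvPolynomial (Fin (n + 1)) k) := by
    rw [← C_mul, mul_inv_cancel₀ hu.ne_zero, C_1]
  rw [hCu] at hfactor
  rw [map_neg, C_mul]
  linear_combination (-C u⁻¹) * hfactor - X' * hinv
end

section
/- Let R be a unique factorization domain with field of fractions K, and let U ∈ R[X, Y] be such that K[X, Y] is a polynomial ring in one variable over K[U] (equivalently, K[X, Y] = K[U, V'] for some V', i.e., U is a variable of K[X, Y]). Then D := K[U] ∩ R[X, Y] is an inert (factorially closed) subring of R[X, Y], and D = R[W] for some W ∈ R[X, Y] with K[W] = K[U]; in particular, D is a polynomial ring in one variable over R. -/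
/-!
After the automorphism of `K[X, Y]` sending `X` to `U`, the subring `K[U]` becomes `K[X]`, which
is factorially closed because degrees in `Y` add under multiplication; intersecting with
`R[X, Y]` preserves this.

For the second part write `U = a + g W` with `a ∈ R` and `W` primitive with zero constant term,
so that `K[W] = K[U]`. If `z ∈ R[X, Y]` equals `F(W)` with `F ∈ K[T]`, clear denominators to get
`G(W) = b z` with `G ∈ R[T]` and `b ∈ R \ {0}`. For each prime `p ∣ b`, the reduction of `W`
modulo `p` is a nonzero polynomial without constant term, hence transcendental over `R/(p)`; so
`G ≡ 0 mod p`, and dividing out the prime factors of `b` one at a time gives `z ∈ R[W]`.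
-/

open MvPolynomial

def IsFactoriallyClosed {M : Type*} [MulZeroClass M] (S : Set M) : Prop :=
  ∀ ⦃x y : M⦄, x ≠ 0 → y ≠ 0 → x * y ∈ S → x ∈ S ∧ y ∈ S

theorem IsFactoriallyClosed.preimage {M N F : Type*} [MulZeroClass M] [MulZeroClass N]
    [FunLike F M N] [MulHomClass F M N] [ZeroHomClass F M N] {S : Set N}
    (hS : IsFactoriallyClosed S) (f : F) (hf : Function.Injective f) :
    IsFactoriallyClosed (f ⁻¹' S) := by
  intro x y hx hy hxy
  refine hS ?_ ?_ (by simpa [map_mul] using hxy) <;>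
    exact (map_ne_zero_iff f hf).mpr ‹_›

theorem Algebra.adjoin_singleton_algebraMap_mul_add {R A : Type*} [CommRing R] [Ring A]
    [Algebra R A] {c : R} (hc : IsUnit c) (a : R) (w : A) :
    Algebra.adjoin R {algebraMap R A c * w + algebraMap R A a} = Algebra.adjoin R {w} := by
  set u := algebraMap R A c * w + algebraMap R A a
  have hw : w = algebraMap R A ↑hc.unit⁻¹ * (u - algebraMap R A a) := by
    rw [add_sub_cancel_right, ← mul_assoc, ← map_mul, hc.val_inv_mul, map_one, one_mul]
  apply le_antisymm <;> refine Algebra.adjoin_le (Set.singleton_subset_iff.mpr ?_)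
  · exact add_mem (mul_mem (algebraMap_mem _ c) (Algebra.self_mem_adjoin_singleton R w))
      (algebraMap_mem _ a)
  · rw [hw]
    exact mul_mem (algebraMap_mem _ _)
      (sub_mem (Algebra.self_mem_adjoin_singleton R u) (algebraMap_mem _ a))

theorem Polynomial.C_dvd_iff_map_mk_span_eq_zero {R : Type*} [CommRing R] (p : R)
    (G : Polynomial R) :
    Polynomial.C p ∣ G ↔ G.map (Ideal.Quotient.mk (Ideal.span {p})) = 0 := by
  simp [Polynomial.C_dvd_iff_dvd_coeff, Polynomial.ext_iff, Ideal.Quotient.eq_zero_iff_dvd]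

namespace MvPolynomial

variable {σ : Type*}

theorem isFactoriallyClosed_supported {R : Type*} [CommSemiring R] [NoZeroDivisors R]
    (s : Set σ) : IsFactoriallyClosed (supported R s : Set (MvPolynomial σ R)) := by
  classical
  intro p q hp hq hpq
  simpa only [SetLike.mem_coe, mem_supported, vars_def, degrees_mul_eq hp hq,
    Multiset.toFinset_add, Finset.coe_union, Set.union_subset_iff] using hpq

theorem isFactoriallyClosed_adjoin_apply_X {R : Type*} [CommSemiring R] [NoZeroDivisors R]
    (e : MvPolynomial σ R ≃ₐ[R] MvPolynomial σ R) (i : σ) :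
    IsFactoriallyClosed (Algebra.adjoin R {e (X i)} : Set (MvPolynomial σ R)) := by
  have : Algebra.adjoin R {e (X i)} = (supported R {i}).map (e : _ →ₐ[R] _) := by
    rw [supported_eq_adjoin_X, Set.image_singleton, AlgHom.map_adjoin, Set.image_singleton,
      AlgEquiv.coe_toAlgHom]
  rw [this, Subalgebra.coe_map, AlgEquiv.coe_toAlgHom,
    Set.image_eq_preimage_of_inverse e.symm_apply_apply e.apply_symm_apply]
  exact (isFactoriallyClosed_supported _).preimage e.symm e.symm.injective

theorem apply_X_ne_C {R : Type*} [CommSemiring R] [Nontrivial R]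
    (e : MvPolynomial σ R ≃ₐ[R] MvPolynomial σ R) (i : σ) (c : R) : e (X i) ≠ C c := by
  intro h
  have : X i = (C c : MvPolynomial σ R) := e.injective <| by rw [h, ← algebraMap_eq, e.commutes]
  simpa using congrArg totalDegree this

theorem map_polynomial_aeval {R S : Type*} [CommSemiring R] [CommSemiring S] (f : R →+* S)
    (W : MvPolynomial σ R) (G : Polynomial R) :
    map f (Polynomial.aeval W G) = Polynomial.aeval (map f W) (G.map f) :=
  Polynomial.map_aeval_eq_aeval_map (by ext; simp) G W

section CommRing

variable {R : Type*} [CommRing R]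

theorem transcendental_of_degreeOf_ne_zero [IsDomain R] {f : MvPolynomial σ R} {i : σ}
    (h : degreeOf i f ≠ 0) : Transcendental R f := by
  classical
  -- view `f` as a polynomial in `X i` over the polynomials in the other variables
  let e := (renameEquiv R (Equiv.optionSubtypeNe i).symm).trans (optionEquivLeft R {j // j ≠ i})
  have hef : e f ≠ 0 := by
    refine (map_ne_zero_iff e e.injective).mpr ?_
    rintro rfl
    simp at h
  have := Polynomial.transcendental (e f) (by rwa [degreeOf_eq_natDegree] at h)
    (mem_nonZeroDivisors_of_ne_zero (Polynomial.leadingCoeff_ne_zero.mpr hef))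
  exact (not_congr (isAlgebraic_algHom_iff e.toAlgHom e.injective)).mp
    (this.restrictScalars (C_injective _ _))

theorem transcendental_of_constantCoeff_eq_zero [IsDomain R] {f : MvPolynomial σ R}
    (hf : f ≠ 0) (h : constantCoeff f = 0) : Transcendental R f := by
  obtain ⟨m, hm⟩ := ne_zero_iff.mp hf
  have hm0 : m ≠ 0 := by
    rintro rfl
    exact hm (by rwa [← constantCoeff_eq])
  obtain ⟨i, hi⟩ := Finsupp.ne_iff.mp hm0
  exact transcendental_of_degreeOf_ne_zero (i := i)
    ((Nat.pos_of_ne_zero hi).trans_le (monomial_le_degreeOf i (mem_support_iff.mpr hm))).ne'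

theorem C_dvd_iff_map_mk_span_eq_zero (p : R) (W : MvPolynomial σ R) :
    C p ∣ W ↔ map (Ideal.Quotient.mk (Ideal.span {p})) W = 0 :=
  C_dvd_iff_map_hom_eq_zero _ _ (fun _ => Ideal.Quotient.eq_zero_iff_dvd ..) _

theorem transcendental_map_mk_span_of_not_C_dvd [IsDomain R] {p : R} (hp : Prime p)
    {W : MvPolynomial σ R} (hW : constantCoeff W = 0) (hpW : ¬ C p ∣ W) :
    Transcendental (R ⧸ Ideal.span {p}) (map (Ideal.Quotient.mk (Ideal.span {p})) W) := by
  have := (Ideal.span_singleton_prime hp.ne_zero).mpr hp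
  refine transcendental_of_constantCoeff_eq_zero ?_ ?_
  · rwa [Ne, ← C_dvd_iff_map_mk_span_eq_zero]
  · rw [constantCoeff_map, hW, map_zero]

theorem C_dvd_of_aeval_eq_C_mul_of_transcendental {p : R} {W : MvPolynomial σ R}
    (hW : Transcendental (R ⧸ Ideal.span {p}) (map (Ideal.Quotient.mk (Ideal.span {p})) W))
    {G : Polynomial R} {z : MvPolynomial σ R} (h : Polynomial.aeval W G = C p * z) :
    Polynomial.C p ∣ G := by
  rw [Polynomial.C_dvd_iff_map_mk_span_eq_zero]
  refine transcendental_iff.mp hW _ ?_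
  rw [← map_polynomial_aeval, ← C_dvd_iff_map_mk_span_eq_zero, h]
  exact dvd_mul_right _ _

theorem C_dvd_of_aeval_eq_C_mul [IsDomain R] [UniqueFactorizationMonoid R]
    {W : MvPolynomial σ R}
    (hW : ∀ p : R, Prime p →
      Transcendental (R ⧸ Ideal.span {p}) (map (Ideal.Quotient.mk (Ideal.span {p})) W))
    {d : R} (hd : d ≠ 0) {G : Polynomial R} {z : MvPolynomial σ R}
    (h : Polynomial.aeval W G = C d * z) : Polynomial.C d ∣ G := by
  induction d using UniqueFactorizationMonoid.induction_on_prime generalizing G with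
  | h₁ => exact absurd rfl hd
  | h₂ u hu => exact (hu.map Polynomial.C).dvd
  | h₃ a p ha hp ih =>
    obtain ⟨G', rfl⟩ := C_dvd_of_aeval_eq_C_mul_of_transcendental (hW p hp)
      (h.trans (by rw [C_mul, mul_assoc]))
    have h' : Polynomial.aeval W G' = C a * z := by
      refine mul_left_cancel₀ (C_ne_zero.mpr hp.ne_zero) ?_
      rw [← mul_assoc, ← C_mul, ← h, map_mul, Polynomial.aeval_C, algebraMap_eq]
    rw [Polynomial.C_mul]
    exact mul_dvd_mul_left _ (ih (right_ne_zero_of_mul hd) h')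

theorem mem_adjoin_map_iff {K : Type*} [Field K] [Algebra R K] [IsFractionRing R K]
    [IsDomain R] [UniqueFactorizationMonoid R] {W : MvPolynomial σ R}
    (hW : ∀ p : R, Prime p →
      Transcendental (R ⧸ Ideal.span {p}) (map (Ideal.Quotient.mk (Ideal.span {p})) W))
    (z : MvPolynomial σ R) :
    map (algebraMap R K) z ∈ Algebra.adjoin K {map (algebraMap R K) W} ↔
      z ∈ Algebra.adjoin R {W} := by
  have hinj := map_injective (σ := σ) _ (IsFractionRing.injective R K)
  simp only [Algebra.adjoin_singleton_eq_range_aeval, AlgHom.mem_range]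
  constructor
  · rintro ⟨F, hF⟩
    obtain ⟨b, hbR, hb⟩ := IsLocalization.integerNormalization_spec (nonZeroDivisors R) F
    have hb0 : b ≠ 0 := nonZeroDivisors.ne_zero hbR
    set G := IsLocalization.integerNormalization (nonZeroDivisors R) F
    have hG : Polynomial.aeval W G = C b * z := hinj <| by
      rw [map_polynomial_aeval, hb, map_mul, map_C, ← hF, ← algebraMap_smul K, map_smul,
        smul_eq_C_mul]
    obtain ⟨G', hG'⟩ := C_dvd_of_aeval_eq_C_mul hW hb0 hG
    refine ⟨G', mul_left_cancel₀ (C_ne_zero.mpr hb0) ?_⟩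
    rw [← hG, hG', map_mul, Polynomial.aeval_C, algebraMap_eq]
  · rintro ⟨G, rfl⟩
    exact ⟨G.map (algebraMap R K), (map_polynomial_aeval _ _ _).symm⟩

theorem exists_eq_C_mul_forall_prime_not_C_dvd [IsDomain R] [NormalizedGCDMonoid R]
    {f : MvPolynomial σ R} (hf : f ≠ 0) :
    ∃ g W, g ≠ 0 ∧ f = C g * W ∧ ∀ p : R, Prime p → ¬ C p ∣ W := by
  classical
  set g := f.support.gcd (coeff · f)
  have hg : g ≠ 0 := fun h => hf <| by
    ext m
    by_cases hm : m ∈ f.support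
    · exact Finset.gcd_eq_zero_iff.mp h m hm
    · exact notMem_support_iff.mp hm
  have hg_dvd : ∀ m, g ∣ coeff m f := fun m => by
    by_cases hm : m ∈ f.support
    · exact Finset.gcd_dvd hm
    · rw [notMem_support_iff.mp hm]
      exact dvd_zero _
  have dvd_g : ∀ r, (∀ m, r ∣ coeff m f) → r ∣ g := fun r hr =>
    Finset.dvd_gcd fun m _ => hr m
  clear_value g
  obtain ⟨W, rfl⟩ : C g ∣ f := (C_dvd_iff_dvd_coeff _ _).mpr hg_dvd
  refine ⟨g, W, hg, rfl, fun p hp hpW => hp.not_isUnit (isUnit_of_dvd_one ?_)⟩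
  have hgp : g * p ∣ g := dvd_g _ fun m => by
    rw [coeff_C_mul]
    exact mul_dvd_mul_left _ ((C_dvd_iff_dvd_coeff _ _).mp hpW m)
  rwa [← mul_dvd_mul_iff_left hg, mul_one]

theorem exists_eq_C_mul_add_C [IsDomain R] [NormalizedGCDMonoid R] {U : MvPolynomial σ R}
    (hU : ∀ c, U ≠ C c) :
    ∃ g W, g ≠ 0 ∧ U = C g * W + C (constantCoeff U) ∧ Transcendental R W ∧
      ∀ p : R, Prime p →
        Transcendental (R ⧸ Ideal.span {p}) (map (Ideal.Quotient.mk (Ideal.span {p})) W) := by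
  obtain ⟨g, W, hg, hUW, hW⟩ :=
    exists_eq_C_mul_forall_prime_not_C_dvd (sub_ne_zero.mpr (hU (constantCoeff U)))
  have hW_ne : W ≠ 0 := by
    rintro rfl
    exact hU _ (sub_eq_zero.mp (by simpa using hUW))
  have hW0 : constantCoeff W = 0 := by simpa [hg] using congrArg constantCoeff hUW
  exact ⟨g, W, hg, eq_add_of_sub_eq hUW, transcendental_of_constantCoeff_eq_zero hW_ne hW0,
    fun p hp => transcendental_map_mk_span_of_not_C_dvd hp hW0 (hW p hp)⟩

end CommRing

end MvPolynomial

/-- Let `R` be a UFD with fraction field `K`, and `U ∈ R[X,Y]` such that `K[X,Y]` is a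
polynomial ring in one variable over `K[U]`.  Then `D := K[U] ∩ R[X,Y]` is an inert
(factorially closed) subring of `R[X,Y]` and `D = R[W]` for some `W ∈ R[X,Y]` with
`K[W] = K[U]`; since `W` is transcendental over `R`, `D` is a polynomial ring in one variable
over `R`.  Here `R[X,Y]` is identified with its image in `K[X,Y]`, so `D` corresponds to the
set of `z ∈ R[X,Y]` whose image lies in `K[U]`. -/
theorem inert_coordinate_ring_in_ufd
    {R : Type*} [CommRing R] [IsDomain R] [UniqueFactorizationMonoid R]
    {K : Type*} [Field K] [Algebra R K] [IsFractionRing R K]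
    (U : MvPolynomial (Fin 2) R)
    (hU : ∃ V', Function.Bijective
      (aeval ![MvPolynomial.map (algebraMap R K) U, V'] :
        MvPolynomial (Fin 2) K →ₐ[K] MvPolynomial (Fin 2) K)) :
    (∀ x y : MvPolynomial (Fin 2) R, x ≠ 0 → y ≠ 0 →
      MvPolynomial.map (algebraMap R K) (x * y) ∈
        Algebra.adjoin K {MvPolynomial.map (algebraMap R K) U} →
      MvPolynomial.map (algebraMap R K) x ∈
        Algebra.adjoin K {MvPolynomial.map (algebraMap R K) U} ∧
      MvPolynomial.map (algebraMap R K) y ∈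
        Algebra.adjoin K {MvPolynomial.map (algebraMap R K) U}) ∧
    ∃ W : MvPolynomial (Fin 2) R,
      Transcendental R W ∧
      {z : MvPolynomial (Fin 2) R |
        MvPolynomial.map (algebraMap R K) z ∈
          Algebra.adjoin K {MvPolynomial.map (algebraMap R K) U}} =
        (Algebra.adjoin R {W} : Set (MvPolynomial (Fin 2) R)) ∧
      Algebra.adjoin K {MvPolynomial.map (algebraMap R K) W} =
        Algebra.adjoin K {MvPolynomial.map (algebraMap R K) U} := by
  obtain ⟨V', hbij⟩ := hU
  let e := AlgEquiv.ofBijective _ hbij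
  have hX : e (X 0) = map (algebraMap R K) U := by simp [e]
  have hU_ne : ∀ c, U ≠ C c := fun c h => apply_X_ne_C e 0 (algebraMap R K c) <| by
    rw [hX, h, map_C]
  let := UniqueFactorizationMonoid.strongNormalizationMonoid (α := R)
  let := UniqueFactorizationMonoid.toNormalizedGCDMonoid R
  obtain ⟨g, W, hg, hUW, hW, hW_mod⟩ := exists_eq_C_mul_add_C hU_ne
  have hKW : Algebra.adjoin K {map (algebraMap R K) W} =
      Algebra.adjoin K {map (algebraMap R K) U} := by
    rw [hUW, map_add, map_mul, map_C, map_C, ← algebraMap_eq,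
      Algebra.adjoin_singleton_algebraMap_mul_add]
    exact ((map_ne_zero_iff _ (IsFractionRing.injective R K)).mpr hg).isUnit
  refine ⟨fun x y => ?_, W, hW, ?_, hKW⟩
  · rw [← hX]
    exact (isFactoriallyClosed_adjoin_apply_X e 0).preimage _
      (map_injective _ (IsFractionRing.injective R K)) (x := x) (y := y)
  ext z
  rw [← hKW]
  exact mem_adjoin_map_iff hW_mod z
end

section
/- Let p be a prime number, R = ℤ_(p) the localization of ℤ at the prime ideal (p), a = Y^p + Y + p·X ∈ R[X, Y], and g = Z^p − a ∈ R[X, Y, Z]. Then R[X, Y, Z] is a polynomial ring in two variables over R[g] (in particular R[X, Y, Z]/(g) is isomorphic as an R-algebra to a polynomial ring in two variables over R), but R[X, Y] is NOT a polynomial ring in one variable over R[a]. -/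
/-!
Write `x, y, z` for `X 0, X 1, X 2` and `s(u, v) = ((u + v)ᵖ - uᵖ - vᵖ) / p`. With `f₁ = z - y` and
`f₂ = x - s(f₁, y)` one has `g = f₁ᵖ - y - p f₂`, so `y`, then `z = f₁ + y` and `x = f₂ + s(f₁, y)`
are polynomials in `g, f₁, f₂`: these form a coordinate system, and `R[x, y, z]/(g) ≅ R[f₁, f₂]`.

If `R[x, y] = A[h]` with `A = R[a]`, then `𝔭 R[x, y]` is prime for every prime `𝔭` of `A`. Take for
`𝔭` the elements of `A` whose constant term lies in `(p)`. It contains `a` and `p`, hence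
`y (yᵖ⁻¹ + 1) = a - p x`. Every element of `A` is its constant term plus a multiple of `a`, so the
reduction `R[x, y] → 𝔽_p[T]`, `x ↦ 0`, `y ↦ T` sends `𝔭 R[x, y]` into `(Tᵖ + T)`, which contains
neither `T` nor `Tᵖ⁻¹ + 1`.
-/

open MvPolynomial

noncomputable def binomialMiddleDiv {T : Type*} [CommSemiring T] (p : ℕ) (x y : T) : T :=
  ∑ k ∈ Finset.Ioo 0 p, x ^ k * y ^ (p - k) * ((p.choose k / p : ℕ) : T)

theorem add_pow_eq_add_add_mul_binomialMiddleDiv {T : Type*} [CommSemiring T] {p : ℕ}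
    (hp : p.Prime) (x y : T) : (x + y) ^ p = x ^ p + y ^ p + p * binomialMiddleDiv p x y :=
  add_pow_prime_eq' hp x y

theorem map_binomialMiddleDiv {T U F : Type*} [CommSemiring T] [CommSemiring U] [FunLike F T U]
    [RingHomClass F T U] (φ : F) (p : ℕ) (x y : T) :
    φ (binomialMiddleDiv p x y) = binomialMiddleDiv p (φ x) (φ y) := by
  simp only [binomialMiddleDiv, map_sum, map_mul, map_pow, map_natCast]

section Coordinates

variable (R : Type*) [CommRing R] (p : ℕ)

noncomputable def gCoords : MvPolynomial (Fin 3) R →ₐ[R] MvPolynomial (Fin 3) R :=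
  aeval ![X 2 ^ p - (X 1 ^ p + X 1 + (p : MvPolynomial (Fin 3) R) * X 0), X 2 - X 1,
    X 0 - binomialMiddleDiv p (X 2 - X 1) (X 1)]

-- `y = f₁ᵖ - p f₂ - g`, `z = f₁ + y`, `x = f₂ + s(f₁, y)`, with `(g, f₁, f₂)` renamed `(x, y, z)`.
noncomputable def gCoordsInv : MvPolynomial (Fin 3) R →ₐ[R] MvPolynomial (Fin 3) R :=
  let y : MvPolynomial (Fin 3) R := X 1 ^ p - (p : MvPolynomial (Fin 3) R) * X 2 - X 0
  aeval ![X 2 + binomialMiddleDiv p (X 1) y, y, X 1 + y]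

variable {R p}

theorem gCoords_X_zero :
    gCoords R p (X 0) = X 2 ^ p - (X 1 ^ p + X 1 + (p : MvPolynomial (Fin 3) R) * X 0) := by
  simp [gCoords]

theorem gCoords_X_one : gCoords R p (X 1) = X 2 - X 1 := by
  simp [gCoords]

theorem gCoords_X_two : gCoords R p (X 2) = X 0 - binomialMiddleDiv p (X 2 - X 1) (X 1) := by
  simp [gCoords]

theorem gCoords_apply_sub (hp : p.Prime) :
    gCoords R p (X 1 ^ p - (p : MvPolynomial (Fin 3) R) * X 2 - X 0) = X 1 := by
  have h := add_pow_eq_add_add_mul_binomialMiddleDiv hp (X 2 - X 1 : MvPolynomial (Fin 3) R) (X 1)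
  rw [sub_add_cancel] at h
  simp only [map_sub, map_pow, map_mul, map_natCast, gCoords_X_zero, gCoords_X_one, gCoords_X_two]
  linear_combination -h

theorem gCoordsInv_X_zero : gCoordsInv R p (X 0) =
    X 2 + binomialMiddleDiv p (X 1) (X 1 ^ p - (p : MvPolynomial (Fin 3) R) * X 2 - X 0) := by
  simp [gCoordsInv]

theorem gCoordsInv_X_one :
    gCoordsInv R p (X 1) = X 1 ^ p - (p : MvPolynomial (Fin 3) R) * X 2 - X 0 := by
  simp [gCoordsInv]

theorem gCoordsInv_X_two :
    gCoordsInv R p (X 2) = X 1 + (X 1 ^ p - (p : MvPolynomial (Fin 3) R) * X 2 - X 0) := by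
  simp [gCoordsInv]

theorem gCoords_comp_gCoordsInv (hp : p.Prime) :
    (gCoords R p).comp (gCoordsInv R p) = AlgHom.id R _ := by
  refine algHom_ext fun i => ?_
  fin_cases i
  · show gCoords R p (gCoordsInv R p (X 0)) = X 0
    rw [gCoordsInv_X_zero, map_add, map_binomialMiddleDiv, gCoords_apply_sub hp, gCoords_X_one,
      gCoords_X_two, sub_add_cancel]
  · show gCoords R p (gCoordsInv R p (X 1)) = X 1
    rw [gCoordsInv_X_one, gCoords_apply_sub hp]
  · show gCoords R p (gCoordsInv R p (X 2)) = X 2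
    rw [gCoordsInv_X_two, map_add, gCoords_apply_sub hp, gCoords_X_one, sub_add_cancel]

theorem gCoordsInv_comp_gCoords (hp : p.Prime) :
    (gCoordsInv R p).comp (gCoords R p) = AlgHom.id R _ := by
  refine algHom_ext fun i => ?_
  set y : MvPolynomial (Fin 3) R := X 1 ^ p - (p : MvPolynomial (Fin 3) R) * X 2 - X 0
  fin_cases i
  · show gCoordsInv R p (gCoords R p (X 0)) = X 0
    have h := add_pow_eq_add_add_mul_binomialMiddleDiv hp (X 1) y
    simp only [gCoords_X_zero, map_add, map_sub, map_mul, map_pow, map_natCast, gCoordsInv_X_zero,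
      gCoordsInv_X_one, gCoordsInv_X_two]
    linear_combination h
  · show gCoordsInv R p (gCoords R p (X 1)) = X 1
    rw [gCoords_X_one, map_sub, gCoordsInv_X_one, gCoordsInv_X_two, add_sub_cancel_right]
  · show gCoordsInv R p (gCoords R p (X 2)) = X 2
    rw [gCoords_X_two, map_sub, map_binomialMiddleDiv, map_sub, gCoordsInv_X_zero,
      gCoordsInv_X_one, gCoordsInv_X_two, add_sub_cancel_right, add_sub_cancel_right]

noncomputable def gCoordsEquiv (hp : p.Prime) :
    MvPolynomial (Fin 3) R ≃ₐ[R] MvPolynomial (Fin 3) R :=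
  AlgEquiv.ofAlgHom _ _ (gCoords_comp_gCoordsInv hp) (gCoordsInv_comp_gCoords hp)

end Coordinates

noncomputable def MvPolynomial.quotientSpanXZeroAlgEquiv (R : Type*) [CommRing R] (n : ℕ) :
    (MvPolynomial (Fin (n + 1)) R ⧸ Ideal.span {(X 0 : MvPolynomial (Fin (n + 1)) R)}) ≃ₐ[R]
      MvPolynomial (Fin n) R :=
  (Ideal.quotientEquivAlg _ (Ideal.span {Polynomial.X - Polynomial.C 0}) (finSuccEquiv R n)
    (by simp [Ideal.map_span, finSuccEquiv_X_zero])).trans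
    ((Polynomial.quotientSpanXSubCAlgEquiv (0 : MvPolynomial (Fin n) R)).restrictScalars R)

noncomputable def MvPolynomial.quotientSpanAlgEquivOfEqXZero {R : Type*} [CommRing R] {n : ℕ}
    (e : MvPolynomial (Fin (n + 1)) R ≃ₐ[R] MvPolynomial (Fin (n + 1)) R)
    {g : MvPolynomial (Fin (n + 1)) R} (hg : e (X 0) = g) :
    (MvPolynomial (Fin (n + 1)) R ⧸ Ideal.span {g}) ≃ₐ[R] MvPolynomial (Fin n) R :=
  (Ideal.quotientEquivAlg _ _ e (by rw [Ideal.map_span, Set.image_singleton, ← hg]; rfl)).symm.trans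
    (quotientSpanXZeroAlgEquiv R n)

theorem Ideal.isPrime_map_algebraMap_of_algEquiv_polynomial {A B : Type*} [CommRing A]
    [CommRing B] [Algebra A B] (e : Polynomial A ≃ₐ[A] B) (P : Ideal A) [P.IsPrime] :
    (P.map (algebraMap A B)).IsPrime := by
  have h := Ideal.map_isPrime_of_equiv (e : Polynomial A ≃+* B) (I := P.map Polynomial.C)
  have he : ((e : Polynomial A ≃+* B) : Polynomial A →+* B) = (e.toAlgHom : Polynomial A →+* B) :=
    rfl
  rwa [← Ideal.map_coe (F := Polynomial A ≃+* B), Ideal.map_map, ← Polynomial.algebraMap_eq, he,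
    AlgHom.comp_algebraMap] at h

theorem sub_algebraMap_mem_span_of_mem_adjoin {R B : Type*} [CommRing R] [CommRing B]
    [Algebra R B]
    (φ : B →ₐ[R] R) {a x : B} (ha : φ a = 0) (hx : x ∈ Algebra.adjoin R {a}) :
    x - algebraMap R B (φ x) ∈ Ideal.span {a} := by
  induction hx using Algebra.adjoin_induction with
  | mem y hy =>
    rw [Set.mem_singleton_iff.mp hy, ha, map_zero, sub_zero]
    exact Ideal.mem_span_singleton_self a
  | algebraMap r => simp
  | add y z _ _ hy hz =>
    convert add_mem hy hz using 1
    simp only [map_add]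
    ring
  | mul y z _ _ hy hz =>
    convert add_mem (Ideal.mul_mem_right z _ hy) (Ideal.mul_mem_left _ (algebraMap R B (φ y)) hz)
      using 1
    simp only [map_mul]
    ring

section

open Polynomial

variable {K : Type*} [CommRing K] [IsDomain K] {n : ℕ}

theorem Polynomial.not_X_pow_add_X_dvd_X (hn : 2 ≤ n) : ¬ (X ^ n + X : K[X]) ∣ X := by
  intro h
  have hdeg := natDegree_le_of_dvd h X_ne_zero
  rw [natDegree_add_eq_left_of_natDegree_lt, natDegree_X_pow, natDegree_X] at hdeg
  · omega
  · rw [natDegree_X_pow, natDegree_X]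
    omega

theorem Polynomial.not_X_pow_add_X_dvd_X_pow_add_one (hn : 2 ≤ n) :
    ¬ (X ^ n + X : K[X]) ∣ X ^ (n - 1) + 1 := by
  intro h
  have h0 := eval_dvd (x := 0) h
  simp [zero_pow (show n ≠ 0 by omega), zero_pow (show n - 1 ≠ 0 by omega)] at h0

end

section

variable {R : Type*} [CommRing R] {P : Ideal R} {π : R} {n : ℕ} {a : MvPolynomial (Fin 2) R}

variable (P) in
noncomputable def reduceAtXZero : MvPolynomial (Fin 2) R →+* Polynomial (R ⧸ P) :=
  eval₂Hom (Polynomial.C.comp (Ideal.Quotient.mk P)) ![0, Polynomial.X]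

theorem reduceAtXZero_eq (hπ : π ∈ P) (ha : a = X 1 ^ n + X 1 + C π * X 0) :
    reduceAtXZero P a = Polynomial.X ^ n + Polynomial.X := by
  simp [reduceAtXZero, ha, Ideal.Quotient.eq_zero_iff_mem.mpr hπ]

theorem X_pow_add_X_dvd_reduceAtXZero (hn : n ≠ 0) (hπ : π ∈ P)
    (ha : a = X 1 ^ n + X 1 + C π * X 0)
    {x : MvPolynomial (Fin 2) R} (hx : x ∈ Algebra.adjoin R {a}) (hxP : aeval 0 x ∈ P) :
    Polynomial.X ^ n + Polynomial.X ∣ reduceAtXZero P x := by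
  have ha0 : aeval (0 : Fin 2 → R) a = 0 := by simp [ha, zero_pow hn]
  obtain ⟨c, hc⟩ := Ideal.mem_span_singleton'.mp (sub_algebraMap_mem_span_of_mem_adjoin _ ha0 hx)
  have hconst : reduceAtXZero P (algebraMap R _ (aeval 0 x)) = 0 := by
    rw [MvPolynomial.algebraMap_eq, reduceAtXZero, eval₂Hom_C, RingHom.comp_apply,
      Ideal.Quotient.eq_zero_iff_mem.mpr hxP, map_zero]
  rw [eq_add_of_sub_eq' hc.symm, map_add, map_mul, reduceAtXZero_eq hπ ha, hconst, zero_add]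
  exact dvd_mul_left _ _

theorem not_bijective_aeval_adjoin [P.IsPrime] (hn : 2 ≤ n) (hπ : π ∈ P)
    (ha : a = X 1 ^ n + X 1 + C π * X 0) (h : MvPolynomial (Fin 2) R) :
    ¬ Function.Bijective (Polynomial.aeval h :
      Polynomial (Algebra.adjoin R {a}) →ₐ[Algebra.adjoin R {a}] MvPolynomial (Fin 2) R) := by
  intro hbij
  set A := Algebra.adjoin R {a}
  set 𝔞 : Ideal A := P.comap ((aeval 0 : MvPolynomial (Fin 2) R →ₐ[R] R).comp A.val)
  have hprime :=
    Ideal.isPrime_map_algebraMap_of_algEquiv_polynomial (AlgEquiv.ofBijective _ hbij) 𝔞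
  have hle : 𝔞.map (algebraMap A _) ≤
      (Ideal.span {Polynomial.X ^ n + Polynomial.X}).comap (reduceAtXZero P) := by
    rw [Ideal.map_le_iff_le_comap]
    exact fun x hx ↦ Ideal.mem_span_singleton.mpr
      (X_pow_add_X_dvd_reduceAtXZero (by omega) hπ ha x.2 hx)
  have hmem : (X 1 * (X 1 ^ (n - 1) + 1) : MvPolynomial (Fin 2) R) ∈ 𝔞.map (algebraMap A _) := by
    have ha𝔞 : (⟨a, Algebra.self_mem_adjoin_singleton R a⟩ : A) ∈ 𝔞 := by
      simp [𝔞, ha, zero_pow (show n ≠ 0 by omega)]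
    have hπ𝔞 : algebraMap R A π ∈ 𝔞 := by simpa [𝔞] using hπ
    have hsplit : (X 1 * (X 1 ^ (n - 1) + 1) : MvPolynomial (Fin 2) R) = a - C π * X 0 := by
      rw [ha, mul_add, mul_one, ← pow_succ', Nat.sub_add_cancel (by omega)]
      ring
    rw [hsplit]
    exact sub_mem (Ideal.mem_map_of_mem _ ha𝔞)
      (Ideal.mul_mem_right _ _ (Ideal.mem_map_of_mem (algebraMap A _) hπ𝔞))
  rcases hprime.mem_or_mem hmem with hmem | hmem <;>
    have hdvd := Ideal.mem_span_singleton.mp (hle hmem)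
  · exact Polynomial.not_X_pow_add_X_dvd_X hn (by simpa [reduceAtXZero] using hdvd)
  · exact Polynomial.not_X_pow_add_X_dvd_X_pow_add_one hn (by simpa [reduceAtXZero] using hdvd)

end

/-- **Example 5.5.**  Let `p` be a prime, `R = ℤ_(p)` the localization of `ℤ` at `(p)`,
`a = Yᵖ + Y + p·X ∈ R[X,Y]` and `g = Zᵖ - a ∈ R[X,Y,Z]`.  Then `R[X,Y,Z] = R[g]^[2]`
(in particular `R[X,Y,Z]/(g) ≅ R^[2]`), but `R[X,Y]` is not a polynomial ring in one
variable over `R[a]`. -/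
theorem example_ZZ_localized_at_p
    (p : ℕ) (hp : p.Prime) [hP : (Ideal.span {(p : ℤ)}).IsPrime]
    (R : Type*) [CommRing R] [Algebra ℤ R]
    [IsLocalization.AtPrime R (Ideal.span {(p : ℤ)})]
    (a : MvPolynomial (Fin 2) R)
    (ha : a = X 1 ^ p + X 1 + (p : MvPolynomial (Fin 2) R) * X 0)
    (g : MvPolynomial (Fin 3) R)
    (hg : g = X 2 ^ p - rename (Fin.castSucc : Fin 2 → Fin 3) a) :
    (∃ f₁ f₂ : MvPolynomial (Fin 3) R,
      Function.Bijective
        (aeval ![g, f₁, f₂] : MvPolynomial (Fin 3) R →ₐ[R] MvPolynomial (Fin 3) R)) ∧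
    Nonempty ((MvPolynomial (Fin 3) R ⧸ Ideal.span {g}) ≃ₐ[R] MvPolynomial (Fin 2) R) ∧
    ¬ (∃ h : MvPolynomial (Fin 2) R,
        Function.Bijective
          (Polynomial.aeval h :
            Polynomial (Algebra.adjoin R {a}) →ₐ[Algebra.adjoin R {a}] MvPolynomial (Fin 2) R)) := by
  have hg' : g = gCoords R p (X 0) := by simp [hg, ha, gCoords_X_zero]
  refine ⟨⟨X 2 - X 1, X 0 - binomialMiddleDiv p (X 2 - X 1) (X 1), ?_⟩,
    ⟨quotientSpanAlgEquivOfEqXZero (gCoordsEquiv hp) hg'.symm⟩, ?_⟩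
  · rw [hg', gCoords_X_zero]
    exact (gCoordsEquiv hp).bijective
  · have := IsLocalization.AtPrime.isLocalRing R (Ideal.span {(p : ℤ)})
    have hp_mem : (p : R) ∈ IsLocalRing.maximalIdeal R := by
      rw [← IsLocalization.AtPrime.map_eq_maximalIdeal (Ideal.span {(p : ℤ)}) R,
        ← map_natCast (algebraMap ℤ R)]
      exact Ideal.mem_map_of_mem _ (Ideal.mem_span_singleton_self _)
    rintro ⟨h, hbij⟩
    exact not_bijective_aeval_adjoin hp.two_le hp_mem (by rw [ha, ← map_natCast C]) h hbij
end
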